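/- arXiv:1603.05752 — 5 statements merged into one kernel-verified Lean document; each statement's English description precedes it below -/
import Mathlib

section
/- Let τ ≥ 1, k = ⌈0.95·τ⌉, T > 0, δ ≥ 0, let U : ℝ → ℝ be concave and nondecreasing, and let D : {1,…,τ} → ℝ be nonnegative. Let ϑ ⊆ {1,…,τ} be a set with |ϑ| = τ − k such that D[t] ≥ D[s] for every t ∈ ϑ and s ∉ ϑ, and define ρ*[t] = 0 for t ∈ ϑ and ρ*[t] = 1 otherwise. Then: (a) the supremum of Σ_{t=1}^{τ} U(T·min{X[t], D[t]}) − δ·max_t ρ[t]·X[t] over all X ≥ 0 and all ρ ∈ {0,1}^τ with Σ_t ρ[t] = k is attained at some pair whose binary component is ρ*; and (b) this optimal value equals the maximum of the concave problem: maximize Σ_{t=1}^{τ} U(T·X[t]) − δ·max_t ρ*[t]·X[t] subject to 0 ≤ X[t] ≤ D[t] for all t, and this maximum is attained. -/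
/-!
Given any feasible pair `(X, ρ)`, cap the usage at the demand, `Y = min X D`; this keeps the
utility and does not raise the billed peak `c = max_t ρ[t] X[t]`, which bounds `Y` on the `k`
slots billed by `ρ`. Now move these slots one at a time from `ϑ` into its complement: for
`a ∈ ϑ` billed and `s ∉ ϑ` unbilled, put `min (Y s) (Y a)` at `s` and `max (Y s) (Y a)` at `a`.
Since `D s ≤ D a` this keeps `Y ≤ D`, and it only permutes the values, so the utility is unchanged.
At the end the slots billed by `ρ*` carry values at most `c`, so the surplus of `(X, ρ)` is at
most the value of the concave problem at a feasible point. Conversely every feasible point of the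
concave problem, paired with `ρ*`, is feasible for the surplus problem, and the concave problem
attains its maximum on the compact box `0 ≤ X ≤ D` because a concave `U` on `ℝ` is continuous.
-/

open Finset

lemma continuous_iSup_of_finite {ι X : Type*} [TopologicalSpace X] [Finite ι]
    {f : ι → X → ℝ} (hf : ∀ i, Continuous (f i)) : Continuous fun x => ⨆ i, f i x := by
  cases isEmpty_or_nonempty ι
  · simpa using continuous_const
  · have := Fintype.ofFinite ι
    simpa only [← Finset.sup'_univ_eq_ciSup] using
      Continuous.finset_sup'_apply Finset.univ_nonempty fun i _ => hf i

lemma IsGreatest.of_subset_of_forall_exists_ge {α : Type*} [Preorder α] {s t : Set α} {a : α}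
    (ha : IsGreatest s a) (hst : s ⊆ t) (h : ∀ b ∈ t, ∃ c ∈ s, b ≤ c) : IsGreatest t a :=
  ⟨hst ha.1, fun b hb => let ⟨_, hc, hbc⟩ := h b hb; hbc.trans (ha.2 hc)⟩

section Exchange

variable {ι : Type*} [DecidableEq ι] {D : ι → ℝ}

lemma exists_perm_comp_le_of_le {Y : ι → ℝ} (hY : ∀ t, Y t ≤ D t) {s a : ι} (hsa : D s ≤ D a) :
    ∃ π : Equiv.Perm ι, (∀ t, Y (π t) ≤ D t) ∧ Y (π s) ≤ Y a ∧
      ∀ t, t ≠ s → t ≠ a → π t = t := by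
  by_cases h : Y a < Y s
  · refine ⟨Equiv.swap s a, fun t => ?_, by simp, fun t => Equiv.swap_apply_of_ne_of_ne⟩
    rcases eq_or_ne t s with rfl | hts
    · simpa using h.le.trans (hY t)
    rcases eq_or_ne t a with rfl | hta
    · simpa using (hY s).trans hsa
    · simpa [Equiv.swap_apply_of_ne_of_ne hts hta] using hY t
  · exact ⟨1, hY, not_lt.mp h, fun _ _ _ => rfl⟩

lemma exists_perm_comp_le_of_card_eq [Fintype ι] {ϑ : Finset ι} (hϑ : ∀ t ∈ ϑ, ∀ s ∉ ϑ, D s ≤ D t)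
    {c : ℝ} (A : Finset ι) (Y : ι → ℝ) (hY : ∀ t, Y t ≤ D t) (hA : ∀ t ∈ A, Y t ≤ c)
    (hcard : #A = #ϑᶜ) : ∃ σ : Equiv.Perm ι, (∀ t, Y (σ t) ≤ D t) ∧ ∀ t ∉ ϑ, Y (σ t) ≤ c := by
  induction h : #(A ∩ ϑ) generalizing A Y with
  | zero =>
    have hAϑ : A = ϑᶜ := eq_of_subset_of_card_le
      (subset_compl_iff_disjoint_right.2 (disjoint_iff_inter_eq_empty.2 (card_eq_zero.1 h)))
      hcard.ge
    exact ⟨1, hY, fun t ht => hA t (hAϑ ▸ mem_compl.2 ht)⟩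
  | succ n ih =>
    obtain ⟨a, haA, haϑ⟩ : ∃ a ∈ A, a ∈ ϑ := by
      obtain ⟨a, ha⟩ : (A ∩ ϑ).Nonempty := card_pos.1 (by omega)
      exact ⟨a, (mem_inter.1 ha).1, (mem_inter.1 ha).2⟩
    obtain ⟨s, hsϑc, hsAϑ⟩ : ∃ s ∈ ϑᶜ, s ∉ A \ ϑ := exists_mem_notMem_of_card_lt_card <|
      hcard ▸ card_lt_card ⟨sdiff_subset, fun hA' => (mem_sdiff.1 (hA' haA)).2 haϑ⟩
    have hsϑ : s ∉ ϑ := mem_compl.1 hsϑc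
    have hsA : s ∉ A := fun hs => hsAϑ (mem_sdiff.2 ⟨hs, hsϑ⟩)
    obtain ⟨π, hπD, hπs, hπ⟩ := exists_perm_comp_le_of_le hY (hϑ a haϑ s hsϑ)
    have hA' : ∀ t ∈ insert s (A.erase a), Y (π t) ≤ c := by
      intro t ht
      rcases mem_insert.1 ht with rfl | ht
      · exact hπs.trans (hA a haA)
      · obtain ⟨hta, htA⟩ := mem_erase.1 ht
        rw [hπ t (ne_of_mem_of_not_mem htA hsA) hta]
        exact hA t htA
    have hcard' : #(insert s (A.erase a)) = #ϑᶜ := by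
      rw [card_insert_of_notMem fun hs => hsA (mem_of_mem_erase hs), card_erase_of_mem haA,
        ← hcard, Nat.sub_add_cancel (card_pos.2 ⟨a, haA⟩)]
    have hn : #(insert s (A.erase a) ∩ ϑ) = n := by
      rw [insert_inter_of_notMem hsϑ, erase_inter, card_erase_of_mem (mem_inter.2 ⟨haA, haϑ⟩),
        h, Nat.add_sub_cancel]
    obtain ⟨σ, hσD, hσc⟩ := ih _ (Y ∘ π) hπD hA' hcard' hn
    exact ⟨π * σ, hσD, hσc⟩

end Exchange

section Surplus

variable {ι : Type*} [Fintype ι] (U : ℝ → ℝ) (T δ : ℝ) (D : ι → ℝ)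

noncomputable def cappedSurplus (ρ X : ι → ℝ) : ℝ := ∑ t, U (T * X t) - δ * ⨆ t, ρ t * X t

def cappedSurplusValues (ρ : ι → ℝ) : Set ℝ :=
  {v | ∃ X : ι → ℝ, (∀ t, 0 ≤ X t ∧ X t ≤ D t) ∧ v = cappedSurplus U T δ ρ X}

def surplusValues (k : ℕ) : Set ℝ :=
  {v | ∃ X ρ : ι → ℝ, (∀ t, 0 ≤ X t) ∧ (∀ t, ρ t = 0 ∨ ρ t = 1) ∧ ∑ t, ρ t = (k : ℝ) ∧
    v = ∑ t, U (T * min (X t) (D t)) - δ * ⨆ t, ρ t * X t}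

variable {U D}

lemma exists_isGreatest_cappedSurplusValues (hU : Continuous U) (hD : ∀ t, 0 ≤ D t)
    (ρ : ι → ℝ) : ∃ X : ι → ℝ, (∀ t, 0 ≤ X t ∧ X t ≤ D t) ∧
      IsGreatest (cappedSurplusValues U T δ D ρ) (cappedSurplus U T δ ρ X) := by
  have hbox : IsCompact {X : ι → ℝ | ∀ t, 0 ≤ X t ∧ X t ≤ D t} := by
    convert isCompact_univ_pi fun t => isCompact_Icc (a := 0) (b := D t) using 1
    ext X
    simp only [Set.mem_pi, Set.mem_univ, Set.mem_Icc, Set.mem_ofPred_eq, forall_const]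
  have hcont : Continuous (cappedSurplus U T δ ρ) :=
    (continuous_finsetSum _ fun t _ => hU.comp (continuous_const.mul (continuous_apply t))).sub
      (continuous_const.mul (continuous_iSup_of_finite fun t =>
        continuous_const.mul (continuous_apply t)))
  obtain ⟨X, hX, hmax⟩ := hbox.exists_isMaxOn ⟨0, fun t => ⟨le_rfl, hD t⟩⟩ hcont.continuousOn
  exact ⟨X, hX, ⟨X, hX, rfl⟩, by rintro _ ⟨Y, hY, rfl⟩; exact hmax hY⟩

variable [DecidableEq ι] {δ} {ϑ : Finset ι} {ρ : ι → ℝ} {k : ℕ}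
  (hρ : ∀ t, ρ t = if t ∈ ϑ then 0 else 1) (hcard : #ϑᶜ = k)
include hρ hcard

lemma cappedSurplusValues_subset_surplusValues :
    cappedSurplusValues U T δ D ρ ⊆ surplusValues U T δ D k := by
  rintro _ ⟨X, hX, rfl⟩
  refine ⟨X, ρ, fun t => (hX t).1, fun t => by rw [hρ t]; split_ifs <;> simp, ?_, ?_⟩
  · simp [hρ, sum_ite, ← hcard, filter_not, compl_eq_univ_sdiff]
  · simp only [cappedSurplus, fun t => min_eq_left (hX t).2]

lemma exists_cappedSurplusValues_ge (hδ : 0 ≤ δ) (hD : ∀ t, 0 ≤ D t)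
    (hϑ : ∀ t ∈ ϑ, ∀ s ∉ ϑ, D s ≤ D t) :
    ∀ v ∈ surplusValues U T δ D k, ∃ w ∈ cappedSurplusValues U T δ D ρ, v ≤ w := by
  rintro _ ⟨X, ρ', hX, hρ', hsum, rfl⟩
  set c := ⨆ t, ρ' t * X t
  set A := univ.filter fun t => ρ' t = 1
  have hA : #A = #ϑᶜ := by
    have : ∑ t, ρ' t = #A := by
      rw [← sum_boole]
      exact sum_congr rfl fun t _ => by rcases hρ' t with h | h <;> simp [h]
    exact_mod_cast hcard ▸ this.symm.trans hsum
  have hc : 0 ≤ c := Real.iSup_nonneg fun t =>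
    mul_nonneg (by rcases hρ' t with h | h <;> simp [h]) (hX t)
  have hAc : ∀ t ∈ A, min (X t) (D t) ≤ c := fun t ht =>
    (min_le_left _ _).trans <| by
      simpa [(mem_filter.1 ht).2] using le_ciSup (Set.finite_range fun t => ρ' t * X t).bddAbove t
  obtain ⟨σ, hσD, hσc⟩ := exists_perm_comp_le_of_card_eq hϑ A (fun t => min (X t) (D t))
    (fun t => min_le_right _ _) hAc hA
  refine ⟨_, ⟨fun t => min (X (σ t)) (D (σ t)), fun t => ⟨le_min (hX _) (hD _), hσD t⟩, rfl⟩, ?_⟩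
  have hpeak : ⨆ t, ρ t * min (X (σ t)) (D (σ t)) ≤ c := Real.iSup_le (fun t => by
    rw [hρ t]
    split_ifs with ht
    · simpa using hc
    · simpa using hσc t ht) hc
  have hutil : ∑ t, U (T * min (X (σ t)) (D (σ t))) = ∑ t, U (T * min (X t) (D t)) :=
    Equiv.sum_comp σ fun t => U (T * min (X t) (D t))
  rw [cappedSurplus, hutil]
  exact sub_le_sub_left (mul_le_mul_of_nonneg_left hpeak hδ) _

end Surplus

theorem deterministic_surplus_reduction_general
    (τ : ℕ) (k : ℕ) (hk : k = ⌈(0.95 : ℝ) * τ⌉₊)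
    (T δ : ℝ) (hδ : 0 ≤ δ)
    (U : ℝ → ℝ) (hUconc : ConcaveOn ℝ Set.univ U)
    (D : Fin τ → ℝ) (hD : ∀ t, 0 ≤ D t)
    (ϑ : Finset (Fin τ)) (hϑcard : ϑ.card = τ - k)
    (hϑ : ∀ t ∈ ϑ, ∀ s ∉ ϑ, D s ≤ D t)
    (ρstar : Fin τ → ℝ) (hρstar : ∀ t, ρstar t = if t ∈ ϑ then 0 else 1) :
    (∃ Xstar : Fin τ → ℝ, (∀ t, 0 ≤ Xstar t) ∧
      (∑ t, U (T * min (Xstar t) (D t))) - δ * (⨆ t, ρstar t * Xstar t)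
        = sSup {v : ℝ | ∃ X ρ : Fin τ → ℝ, (∀ t, 0 ≤ X t) ∧
            (∀ t, ρ t = 0 ∨ ρ t = 1) ∧ (∑ t, ρ t) = (k : ℝ) ∧
            v = (∑ t, U (T * min (X t) (D t))) - δ * (⨆ t, ρ t * X t)}) ∧
    (sSup {v : ℝ | ∃ X ρ : Fin τ → ℝ, (∀ t, 0 ≤ X t) ∧
            (∀ t, ρ t = 0 ∨ ρ t = 1) ∧ (∑ t, ρ t) = (k : ℝ) ∧
            v = (∑ t, U (T * min (X t) (D t))) - δ * (⨆ t, ρ t * X t)}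
      = sSup {v : ℝ | ∃ X : Fin τ → ℝ, (∀ t, 0 ≤ X t ∧ X t ≤ D t) ∧
            v = (∑ t, U (T * X t)) - δ * (⨆ t, ρstar t * X t)}) ∧
    (∃ X : Fin τ → ℝ, (∀ t, 0 ≤ X t ∧ X t ≤ D t) ∧
      (∑ t, U (T * X t)) - δ * (⨆ t, ρstar t * X t)
        = sSup {v : ℝ | ∃ X' : Fin τ → ℝ, (∀ t, 0 ≤ X' t ∧ X' t ≤ D t) ∧
            v = (∑ t, U (T * X' t)) - δ * (⨆ t, ρstar t * X' t)}) := by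
  have hkτ : k ≤ τ := hk ▸ Nat.ceil_le.mpr (by linarith [τ.cast_nonneg (α := ℝ)])
  have hcard : #ϑᶜ = k := by rw [card_compl, hϑcard, Fintype.card_fin]; omega
  obtain ⟨X, hX, hcapped⟩ := exists_isGreatest_cappedSurplusValues T δ
    (continuousOn_univ.mp (hUconc.continuousOn isOpen_univ)) hD ρstar
  have hsurplus : IsGreatest (surplusValues U T δ D k) (cappedSurplus U T δ ρstar X) :=
    hcapped.of_subset_of_forall_exists_ge (cappedSurplusValues_subset_surplusValues T hρstar hcard)
      (exists_cappedSurplusValues_ge T hρstar hcard hδ hD hϑ)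
  have hmin : ∀ t, min (X t) (D t) = X t := fun t => min_eq_left (hX t).2
  refine ⟨⟨X, fun t => (hX t).1, ?_⟩, hsurplus.csSup_eq.trans hcapped.csSup_eq.symm,
    X, hX, hcapped.csSup_eq.symm⟩
  simp only [hmin]
  exact hsurplus.csSup_eq.symm

/-- With concave nondecreasing U, T > 0, δ ≥ 0, nonnegative demand D, a set ϑ of
τ − k slots of largest demand, and ρ*[t] = 0 on ϑ and 1 elsewhere:
(a) the supremum of the surplus over X ≥ 0 and binary ρ with Σ_t ρ[t] = k is attained at a
pair whose binary component is ρ*; (b) this optimal value equals the maximum value of the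
concave problem max Σ_t U(T·X[t]) − δ·max_t ρ*[t]·X[t] s.t. 0 ≤ X ≤ D, which is attained. -/
theorem deterministic_surplus_reduction
    (τ : ℕ) (hτ : 1 ≤ τ) (k : ℕ) (hk : k = ⌈(0.95 : ℝ) * τ⌉₊)
    (T δ : ℝ) (hT : 0 < T) (hδ : 0 ≤ δ)
    (U : ℝ → ℝ) (hUconc : ConcaveOn ℝ Set.univ U) (hU : Monotone U)
    (D : Fin τ → ℝ) (hD : ∀ t, 0 ≤ D t)
    (ϑ : Finset (Fin τ)) (hϑcard : ϑ.card = τ - k)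
    (hϑ : ∀ t ∈ ϑ, ∀ s ∉ ϑ, D s ≤ D t)
    (ρstar : Fin τ → ℝ) (hρstar : ∀ t, ρstar t = if t ∈ ϑ then 0 else 1) :
    (∃ Xstar : Fin τ → ℝ, (∀ t, 0 ≤ Xstar t) ∧
      (∑ t, U (T * min (Xstar t) (D t))) - δ * (⨆ t, ρstar t * Xstar t)
        = sSup {v : ℝ | ∃ X ρ : Fin τ → ℝ, (∀ t, 0 ≤ X t) ∧
            (∀ t, ρ t = 0 ∨ ρ t = 1) ∧ (∑ t, ρ t) = (k : ℝ) ∧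
            v = (∑ t, U (T * min (X t) (D t))) - δ * (⨆ t, ρ t * X t)}) ∧
    (sSup {v : ℝ | ∃ X ρ : Fin τ → ℝ, (∀ t, 0 ≤ X t) ∧
            (∀ t, ρ t = 0 ∨ ρ t = 1) ∧ (∑ t, ρ t) = (k : ℝ) ∧
            v = (∑ t, U (T * min (X t) (D t))) - δ * (⨆ t, ρ t * X t)}
      = sSup {v : ℝ | ∃ X : Fin τ → ℝ, (∀ t, 0 ≤ X t ∧ X t ≤ D t) ∧
            v = (∑ t, U (T * X t)) - δ * (⨆ t, ρstar t * X t)}) ∧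
    (∃ X : Fin τ → ℝ, (∀ t, 0 ≤ X t ∧ X t ≤ D t) ∧
      (∑ t, U (T * X t)) - δ * (⨆ t, ρstar t * X t)
        = sSup {v : ℝ | ∃ X' : Fin τ → ℝ, (∀ t, 0 ≤ X' t ∧ X' t ≤ D t) ∧
            v = (∑ t, U (T * X' t)) - δ * (⨆ t, ρstar t * X' t)}) :=
  deterministic_surplus_reduction_general τ k hk T δ hδ U hUconc D hD ϑ hϑcard hϑ ρstar hρstar
end

section
/- Let τ ≥ 1, k = ⌈0.95·τ⌉, T > 0, δ ≥ 0, let U : ℝ → ℝ be concave and nondecreasing, let D : {1,…,τ} → ℝ be nonnegative, and let ϑ ⊆ {1,…,τ} with |ϑ| = τ − k be such that D[t] ≥ D[s] for every t ∈ ϑ and s ∉ ϑ. Then there exist μ ≥ 0 and an optimal solution X* of the problem: maximize Σ_{t=1}^{τ} U(T·X[t]) − δ·max_{t∉ϑ} X[t] subject to 0 ≤ X[t] ≤ D[t] for all t, such that X*[t] = D[t] for all t ∈ ϑ and X*[t] = min{μ, D[t]} for all t ∉ ϑ. -/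
/-!
Any feasible plan `X` is dominated slot by slot by the water-filling plan at level
`μ = max_{t ∉ ϑ} X t`, which has the same peak off `ϑ`; since the utility is nondecreasing,
it suffices to optimise over the one-parameter family of water-filling plans. On the levels
`μ ∈ [0, max_{t ∉ ϑ} D t]` the objective of that family is continuous in `μ` (concave utilities
are continuous), so it attains its maximum on this compact interval.
-/

theorem Real.iSup_min_eq_of_le_iSup {ι : Type*} [Finite ι] {f : ι → ℝ} {μ : ℝ}
    (hμ₀ : 0 ≤ μ) (hμ : μ ≤ ⨆ i, f i) : ⨆ i, min μ (f i) = μ := by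
  cases isEmpty_or_nonempty ι with
  | inl _ =>
    rw [Real.iSup_of_isEmpty] at hμ ⊢
    exact (le_antisymm hμ hμ₀).symm
  | inr _ =>
    obtain ⟨i₀, hi₀⟩ := Finite.exists_max f
    have hμi₀ : μ ≤ f i₀ := hμ.trans (ciSup_le hi₀)
    refine le_antisymm (ciSup_le fun _ => min_le_left _ _) ?_
    exact le_ciSup_of_le (Finite.bddAbove_range _) i₀ (le_min le_rfl hμi₀)

namespace WaterFilling

variable {ι : Type*}

noncomputable def objective [Fintype ι] (u : ℝ → ℝ) (δ : ℝ) (ϑ : Finset ι) (X : ι → ℝ) : ℝ :=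
  (∑ t, u (X t)) - δ * ⨆ t : {t : ι // t ∉ ϑ}, X t

variable [DecidableEq ι]

def waterFill (ϑ : Finset ι) (D : ι → ℝ) (μ : ℝ) (t : ι) : ℝ :=
  if t ∈ ϑ then D t else min μ (D t)

noncomputable def levelObjective [Fintype ι] (u : ℝ → ℝ) (δ : ℝ) (ϑ : Finset ι) (D : ι → ℝ)
    (μ : ℝ) : ℝ :=
  (∑ t, u (waterFill ϑ D μ t)) - δ * μ

variable {ϑ : Finset ι} {D : ι → ℝ}

theorem waterFill_of_mem {μ : ℝ} {t : ι} (ht : t ∈ ϑ) : waterFill ϑ D μ t = D t := if_pos ht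

theorem waterFill_of_notMem {μ : ℝ} {t : ι} (ht : t ∉ ϑ) :
    waterFill ϑ D μ t = min μ (D t) := if_neg ht

theorem waterFill_mem_Icc (hD : ∀ t, 0 ≤ D t) {μ : ℝ} (hμ : 0 ≤ μ) (t : ι) :
    waterFill ϑ D μ t ∈ Set.Icc 0 (D t) := by
  by_cases ht : t ∈ ϑ
  · simp [waterFill_of_mem ht, hD t]
  · rw [waterFill_of_notMem ht]
    exact ⟨le_min hμ (hD t), min_le_right _ _⟩

theorem continuous_waterFill (t : ι) : Continuous fun μ => waterFill ϑ D μ t := by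
  by_cases ht : t ∈ ϑ
  · simp only [waterFill_of_mem ht, continuous_const]
  · simp only [waterFill_of_notMem ht]
    exact continuous_id.min continuous_const

variable [Fintype ι]

theorem le_waterFill_iSup {X : ι → ℝ} (hXD : ∀ t, X t ≤ D t) (t : ι) :
    X t ≤ waterFill ϑ D (⨆ s : {s : ι // s ∉ ϑ}, X s) t := by
  by_cases ht : t ∈ ϑ
  · rw [waterFill_of_mem ht]
    exact hXD t
  · rw [waterFill_of_notMem ht]
    exact le_min (le_ciSup (f := fun s : {s : ι // s ∉ ϑ} => X s) (Finite.bddAbove_range _)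
      ⟨t, ht⟩) (hXD t)

theorem iSup_waterFill {μ : ℝ} (hμ₀ : 0 ≤ μ) (hμ : μ ≤ ⨆ s : {s : ι // s ∉ ϑ}, D s) :
    ⨆ s : {s : ι // s ∉ ϑ}, waterFill ϑ D μ s = μ := by
  have hcap (s : {s : ι // s ∉ ϑ}) : waterFill ϑ D μ s = min μ (D s) := waterFill_of_notMem s.2
  simp only [hcap]
  exact Real.iSup_min_eq_of_le_iSup hμ₀ hμ

theorem objective_waterFill {u : ℝ → ℝ} {δ μ : ℝ}
    (hμ : μ ∈ Set.Icc 0 (⨆ s : {s : ι // s ∉ ϑ}, D s)) :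
    objective u δ ϑ (waterFill ϑ D μ) = levelObjective u δ ϑ D μ := by
  rw [objective, levelObjective, iSup_waterFill hμ.1 hμ.2]

theorem continuous_levelObjective {u : ℝ → ℝ} (hu : Continuous u) (δ : ℝ) :
    Continuous (levelObjective u δ ϑ D) :=
  (continuous_finsetSum _ fun t _ => hu.comp (continuous_waterFill t)).sub
    (continuous_const.mul continuous_id)

theorem objective_le_levelObjective_iSup {u : ℝ → ℝ} (hu : Monotone u) (δ : ℝ) {X : ι → ℝ}
    (hXD : ∀ t, X t ≤ D t) :
    objective u δ ϑ X ≤ levelObjective u δ ϑ D (⨆ s : {s : ι // s ∉ ϑ}, X s) := by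
  unfold objective levelObjective
  gcongr with t
  exact hu (le_waterFill_iSup hXD t)

theorem exists_objective_le_objective_waterFill {u : ℝ → ℝ} (hu : Monotone u)
    (hu_cont : Continuous u) (δ : ℝ) (hD : ∀ t, 0 ≤ D t) :
    ∃ μ, 0 ≤ μ ∧ ∀ X : ι → ℝ, (∀ t, X t ∈ Set.Icc 0 (D t)) →
      objective u δ ϑ X ≤ objective u δ ϑ (waterFill ϑ D μ) := by
  set M := ⨆ s : {s : ι // s ∉ ϑ}, D s
  have hM : 0 ≤ M := Real.iSup_nonneg fun s => hD s
  obtain ⟨μ, hμ, hmax⟩ := isCompact_Icc.exists_isMaxOn (Set.nonempty_Icc.2 hM)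
    (continuous_levelObjective (ϑ := ϑ) (D := D) hu_cont δ).continuousOn
  refine ⟨μ, hμ.1, fun X hX => ?_⟩
  have hpeak : (⨆ s : {s : ι // s ∉ ϑ}, X s) ∈ Set.Icc 0 M :=
    ⟨Real.iSup_nonneg fun s => (hX s).1,
      ciSup_mono (Finite.bddAbove_range _) fun s => (hX s).2⟩
  calc objective u δ ϑ X
      ≤ levelObjective u δ ϑ D (⨆ s : {s : ι // s ∉ ϑ}, X s) :=
        objective_le_levelObjective_iSup hu δ fun t => (hX t).2
    _ ≤ levelObjective u δ ϑ D μ := hmax hpeak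
    _ = objective u δ ϑ (waterFill ϑ D μ) := (objective_waterFill hμ).symm

end WaterFilling

open WaterFilling in
theorem optimal_solution_water_filling_form_general
    (τ : ℕ)
    (T δ : ℝ) (hT : 0 < T)
    (U : ℝ → ℝ) (hUconc : ConcaveOn ℝ Set.univ U) (hU : Monotone U)
    (D : Fin τ → ℝ) (hD : ∀ t, 0 ≤ D t)
    (ϑ : Finset (Fin τ)) :
    ∃ (μ : ℝ) (Xstar : Fin τ → ℝ), 0 ≤ μ ∧
      (∀ t, 0 ≤ Xstar t ∧ Xstar t ≤ D t) ∧
      (∀ t ∈ ϑ, Xstar t = D t) ∧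
      (∀ t ∉ ϑ, Xstar t = min μ (D t)) ∧
      (∀ X : Fin τ → ℝ, (∀ t, 0 ≤ X t ∧ X t ≤ D t) →
        (∑ t, U (T * X t)) - δ * (⨆ t : {t : Fin τ // t ∉ ϑ}, X t) ≤
        (∑ t, U (T * Xstar t)) - δ * (⨆ t : {t : Fin τ // t ∉ ϑ}, Xstar t)) := by
  have hUcont : Continuous U := continuousOn_univ.1 (hUconc.continuousOn isOpen_univ)
  obtain ⟨μ, hμ, hopt⟩ := exists_objective_le_objective_waterFill (ϑ := ϑ)
    (fun _ _ hab => hU (mul_le_mul_of_nonneg_left hab hT.le))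
    (hUcont.comp (continuous_const.mul continuous_id)) δ hD
  exact ⟨μ, waterFill ϑ D μ, hμ, waterFill_mem_Icc hD hμ, fun _ => waterFill_of_mem,
    fun _ => waterFill_of_notMem, hopt⟩

/-- With concave nondecreasing U, T > 0, δ ≥ 0, nonnegative demand D, and ϑ a set
of τ − k slots of largest demand, there exist μ ≥ 0 and an optimal solution X* of
max Σ_t U(T·X[t]) − δ·max_{t∉ϑ} X[t] s.t. 0 ≤ X ≤ D, such that X*[t] = D[t] on ϑ and
X*[t] = min{μ, D[t]} off ϑ. -/
theorem optimal_solution_water_filling_form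
    (τ : ℕ) (hτ : 1 ≤ τ) (k : ℕ) (hk : k = ⌈(0.95 : ℝ) * τ⌉₊)
    (T δ : ℝ) (hT : 0 < T) (hδ : 0 ≤ δ)
    (U : ℝ → ℝ) (hUconc : ConcaveOn ℝ Set.univ U) (hU : Monotone U)
    (D : Fin τ → ℝ) (hD : ∀ t, 0 ≤ D t)
    (ϑ : Finset (Fin τ)) (hϑcard : ϑ.card = τ - k)
    (hϑ : ∀ t ∈ ϑ, ∀ s ∉ ϑ, D s ≤ D t) :
    ∃ (μ : ℝ) (Xstar : Fin τ → ℝ), 0 ≤ μ ∧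
      (∀ t, 0 ≤ Xstar t ∧ Xstar t ≤ D t) ∧
      (∀ t ∈ ϑ, Xstar t = D t) ∧
      (∀ t ∉ ϑ, Xstar t = min μ (D t)) ∧
      (∀ X : Fin τ → ℝ, (∀ t, 0 ≤ X t ∧ X t ≤ D t) →
        (∑ t, U (T * X t)) - δ * (⨆ t : {t : Fin τ // t ∉ ϑ}, X t) ≤
        (∑ t, U (T * Xstar t)) - δ * (⨆ t : {t : Fin τ // t ∉ ϑ}, Xstar t)) :=
  optimal_solution_water_filling_form_general τ T δ hT U hUconc hU D hD ϑ
end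

section
/- Let τ ≥ 1, T ≥ 0, μ ≥ 0, let U : ℝ → ℝ be nondecreasing, let D : {1,…,τ} → ℝ, and let ϑ, ν ⊆ {1,…,τ} with |ϑ| = |ν| be such that D[t₁] ≥ D[t₂] for every t₁ ∈ ϑ∖ν and t₂ ∈ ν∖ϑ. Then Σ_{t∈ϑ} U(T·D[t]) + Σ_{t∉ϑ} U(T·min{μ, D[t]}) ≥ Σ_{t∈ν} U(T·D[t]) + Σ_{t∉ν} U(T·min{μ, D[t]}). -/
/-!
Write the value of a choice of uncapped slots as the capped value of all slots plus the gain
`U (T * D t) - U (T * min μ (D t))` over the uncapped ones. This gain is monotone in the demand,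
so swapping the slots of `ν \ ϑ` for the equally many, higher-demand slots of `ϑ \ ν` can only
increase the total.
-/

open Finset

theorem Monotone.monotone_sub_comp_min {α β : Type*} [LinearOrder α] [AddCommGroup β]
    [PartialOrder β] [IsOrderedAddMonoid β] {f : α → β} (hf : Monotone f) (c : α) :
    Monotone fun x => f x - f (min c x) := by
  intro b a hba
  rcases le_total a c with hac | hca
  · simp [min_eq_right hac, min_eq_right (hba.trans hac)]
  rcases le_total b c with hbc | hcb
  · simpa [min_eq_right hbc, min_eq_left hca] using hf hca
  · simpa [min_eq_left hcb, min_eq_left hca] using hf hba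

theorem Finset.sum_le_sum_of_card_eq_of_forall_sdiff_le {ι M : Type*} [DecidableEq ι]
    [AddCommMonoid M] [LinearOrder M] [IsOrderedAddMonoid M] {s t : Finset ι} {h : ι → M}
    (hcard : #s = #t) (hle : ∀ x ∈ s \ t, ∀ y ∈ t \ s, h y ≤ h x) :
    ∑ i ∈ t, h i ≤ ∑ i ∈ s, h i := by
  have hsdiff : #(s \ t) = #(t \ s) := card_sdiff_comm hcard
  suffices ∑ i ∈ t \ s, h i ≤ ∑ i ∈ s \ t, h i by
    rw [← sum_inter_add_sum_sdiff t s, ← sum_inter_add_sum_sdiff s t, inter_comm]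
    exact add_le_add_right this _
  rcases (s \ t).eq_empty_or_nonempty with hst | hst
  · rw [hst, card_empty, eq_comm, card_eq_zero] at hsdiff
    simp [hst, hsdiff]
  calc ∑ i ∈ t \ s, h i ≤ #(t \ s) • (s \ t).inf' hst h :=
        sum_le_card_nsmul _ _ _ fun y hy => le_inf' hst h fun x hx => hle x hx y hy
    _ = #(s \ t) • (s \ t).inf' hst h := by rw [hsdiff]
    _ ≤ ∑ i ∈ s \ t, h i := card_nsmul_le_sum _ _ _ fun x hx => inf'_le h hx

theorem Finset.sum_add_sum_compl_eq_sum_add_sum_sub {ι M : Type*} [Fintype ι] [DecidableEq ι]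
    [AddCommGroup M] (s : Finset ι) (f g : ι → M) :
    ∑ i ∈ s, f i + ∑ i ∈ sᶜ, g i = ∑ i, g i + ∑ i ∈ s, (f i - g i) := by
  rw [sum_sub_distrib, ← sum_compl_add_sum s g]
  abel

theorem uncapped_on_top_slots_dominates_general
    (τ : ℕ) (T μ : ℝ) (hT : 0 ≤ T)
    (U : ℝ → ℝ) (hU : Monotone U) (D : Fin τ → ℝ)
    (ϑ ν : Finset (Fin τ)) (hcard : ϑ.card = ν.card)
    (h : ∀ t₁ ∈ ϑ \ ν, ∀ t₂ ∈ ν \ ϑ, D t₂ ≤ D t₁) :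
    (∑ t ∈ ν, U (T * D t)) + (∑ t ∈ νᶜ, U (T * min μ (D t))) ≤
    (∑ t ∈ ϑ, U (T * D t)) + (∑ t ∈ ϑᶜ, U (T * min μ (D t))) := by
  have hgain := (hU.comp (monotone_mul_left_of_nonneg hT)).monotone_sub_comp_min μ
  rw [sum_add_sum_compl_eq_sum_add_sum_sub ν, sum_add_sum_compl_eq_sum_add_sum_sub ϑ]
  exact add_le_add_right
    (sum_le_sum_of_card_eq_of_forall_sdiff_le hcard fun x hx y hy => hgain (h x hx y hy)) _

/-- For nondecreasing U, T ≥ 0, μ ≥ 0, demand D, and equal-size sets ϑ, ν of time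
slots with D[t₁] ≥ D[t₂] for all t₁ ∈ ϑ∖ν and t₂ ∈ ν∖ϑ, the net utility obtained by serving
demand fully on ϑ and capping at μ elsewhere dominates the analogous quantity for ν. -/
theorem uncapped_on_top_slots_dominates
    (τ : ℕ) (hτ : 1 ≤ τ) (T μ : ℝ) (hT : 0 ≤ T) (hμ : 0 ≤ μ)
    (U : ℝ → ℝ) (hU : Monotone U) (D : Fin τ → ℝ)
    (ϑ ν : Finset (Fin τ)) (hcard : ϑ.card = ν.card)
    (h : ∀ t₁ ∈ ϑ \ ν, ∀ t₂ ∈ ν \ ϑ, D t₂ ≤ D t₁) :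
    (∑ t ∈ ν, U (T * D t)) + (∑ t ∈ νᶜ, U (T * min μ (D t))) ≤
    (∑ t ∈ ϑ, U (T * D t)) + (∑ t ∈ ϑᶜ, U (T * min μ (D t))) :=
  uncapped_on_top_slots_dominates_general τ T μ hT U hU D ϑ ν hcard h
end

section
/- Let τ ≥ 1, T ≥ 0, let U : ℝ → ℝ be nondecreasing, let ρ ∈ {0,1}^τ, let X : {1,…,τ} → ℝ be nonnegative, set μ = max_t ρ[t]·X[t], and let D̄ : {1,…,τ} → ℝ be nonnegative. Define X̄[t] = D̄[t] if ρ[t] = 0 or D̄[t] ≤ μ, and X̄[t] = μ otherwise. Then for every t, U(T·min{X̄[t], D̄[t]}) ≥ U(T·min{X[t], D̄[t]}). -/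
theorem min_le_min_updated_usage {ρ x d μ : ℝ} (hρ : ρ = 0 ∨ ρ = 1) (hx : ρ * x ≤ μ) :
    min x d ≤ min (if ρ = 0 ∨ d ≤ μ then d else μ) d := by
  split_ifs with h
  · exact (min_le_right x d).trans_eq (min_self d).symm
  · have hxμ : x ≤ μ := by simpa [hρ.resolve_left (not_or.mp h).1] using hx
    exact le_min ((min_le_left x d).trans hxμ) (min_le_right x d)

theorem updated_usage_utility_dominates_general
    (τ : ℕ) (T : ℝ) (hT : 0 ≤ T)
    (U : ℝ → ℝ) (hU : Monotone U)
    (ρ : Fin τ → ℝ) (hρ : ∀ t, ρ t = 0 ∨ ρ t = 1)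
    (X : Fin τ → ℝ)
    (μ : ℝ) (hμ : μ = ⨆ t, ρ t * X t)
    (Dbar : Fin τ → ℝ)
    (Xbar : Fin τ → ℝ)
    (hXbar : ∀ t, Xbar t = if ρ t = 0 ∨ Dbar t ≤ μ then Dbar t else μ) :
    ∀ t, U (T * min (X t) (Dbar t)) ≤ U (T * min (Xbar t) (Dbar t)) := by
  intro t
  refine hU (mul_le_mul_of_nonneg_left ?_ hT)
  rw [hXbar t]
  exact min_le_min_updated_usage (hρ t) (hμ ▸ le_ciSup (Finite.bddAbove_range fun s => ρ s * X s) t)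

/-- With μ = max_t ρ[t]·X[t] and the updated usage X̄ defined as on-demand when
ρ[t] = 0 or the exposed demand does not exceed μ, and capped at μ otherwise, the per-slot
utility of the updated usage dominates that of the planned usage:
U(T·min{X̄[t], D̄[t]}) ≥ U(T·min{X[t], D̄[t]}) for all t. -/
theorem updated_usage_utility_dominates
    (τ : ℕ) (hτ : 1 ≤ τ) (T : ℝ) (hT : 0 ≤ T)
    (U : ℝ → ℝ) (hU : Monotone U)
    (ρ : Fin τ → ℝ) (hρ : ∀ t, ρ t = 0 ∨ ρ t = 1)
    (X : Fin τ → ℝ) (hX : ∀ t, 0 ≤ X t)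
    (μ : ℝ) (hμ : μ = ⨆ t, ρ t * X t)
    (Dbar : Fin τ → ℝ) (hDbar : ∀ t, 0 ≤ Dbar t)
    (Xbar : Fin τ → ℝ)
    (hXbar : ∀ t, Xbar t = if ρ t = 0 ∨ Dbar t ≤ μ then Dbar t else μ) :
    ∀ t, U (T * min (X t) (Dbar t)) ≤ U (T * min (Xbar t) (Dbar t)) :=
  updated_usage_utility_dominates_general τ T hT U hU ρ hρ X μ hμ Dbar Xbar hXbar
end

section
/- Let τ ≥ 1, k = ⌈0.95·τ⌉, T ≥ 0, δ ≥ 0, let U : ℝ → ℝ be nondecreasing, let X : {1,…,τ} → ℝ be nonnegative, let ρ ∈ {0,1}^τ with Σ_t ρ[t] = k attain the 95th percentile of X, i.e., μ := max_t ρ[t]·X[t] = μ95(X), and let D̄ : {1,…,τ} → ℝ be nonnegative. Define X̄[t] = D̄[t] if ρ[t] = 0 or D̄[t] ≤ μ, and X̄[t] = μ otherwise. Then Σ_{t=1}^{τ} U(T·X̄[t]) − δ·μ95(X̄) ≥ Σ_{t=1}^{τ} U(T·min{X[t], D̄[t]}) − δ·μ95(X); that is, the surplus obtained with the updated usage X̄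 is no less than the surplus obtained with the planned usage X evaluated against the exposed demand. -/
/-! The updated usage never falls below `min X D̄`: it only deviates from `D̄` on slots with
`ρ t = 1`, where `X t ≤ μ`, and there it is `μ`. Hence the utility term can only grow. It is also
`≤ μ` on the `k` slots with `ρ t = 1`, and such a set of slots witnesses `μ95 X̄ ≤ μ = μ95 X`, so
the billing term can only shrink. -/

/-- The 95th percentile usage: the minimum, over all subsets S of the τ time slots with
|S| = ⌈0.95·τ⌉, of max_{t∈S} x[t]. -/
noncomputable def mu95 (τ : ℕ) (x : Fin τ → ℝ) : ℝ :=
  sInf {m : ℝ | ∃ (S : Finset (Fin τ)) (hS : S.Nonempty),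
    S.card = ⌈(0.95 : ℝ) * τ⌉₊ ∧ m = S.sup' hS x}

open Finset

theorem sum_eq_card_filter_eq_one {ι : Type*} [Fintype ι] (ρ : ι → ℝ)
    (hρ : ∀ t, ρ t = 0 ∨ ρ t = 1) : ∑ t, ρ t = #{t | ρ t = 1} := by
  rw [← sum_boole]
  refine sum_congr rfl fun t _ => ?_
  rcases hρ t with h | h <;> simp [h]

theorem mu95_le_sup' {τ : ℕ} (x : Fin τ → ℝ) (S : Finset (Fin τ)) (hS : S.Nonempty)
    (hcard : S.card = ⌈(0.95 : ℝ) * τ⌉₊) : mu95 τ x ≤ S.sup' hS x := by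
  refine csInf_le ⟨⨅ t, x t, ?_⟩ ⟨S, hS, hcard, rfl⟩
  rintro _ ⟨S', ⟨a, ha⟩, -, rfl⟩
  exact (ciInf_le (Finite.bddBelow_range x) a).trans (le_sup' x ha)

theorem mu95_le_of_forall_mem_le {τ : ℕ} (hτ : 1 ≤ τ) {x : Fin τ → ℝ} {m : ℝ}
    (S : Finset (Fin τ)) (hcard : S.card = ⌈(0.95 : ℝ) * τ⌉₊) (hle : ∀ t ∈ S, x t ≤ m) :
    mu95 τ x ≤ m := by
  have hS : S.Nonempty := by
    rw [← card_pos, hcard, Nat.ceil_pos]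
    have : (1 : ℝ) ≤ τ := by exact_mod_cast hτ
    positivity
  exact (mu95_le_sup' x S hS hcard).trans (sup'_le hS x hle)

theorem min_le_ite_or_le {x d μ : ℝ} {p : Prop} [Decidable p] (hx : ¬p → x ≤ μ) :
    min x d ≤ if p ∨ d ≤ μ then d else μ := by
  split_ifs with h
  · exact min_le_right x d
  · exact (min_le_left x d).trans (hx (not_or.mp h).1)

theorem ite_or_le_le {d μ : ℝ} {p : Prop} [Decidable p] (hp : ¬p) :
    (if p ∨ d ≤ μ then d else μ) ≤ μ := by
  split_ifs with h
  exacts [h.resolve_left hp, le_rfl]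

theorem updated_usage_surplus_dominates_general
    (τ : ℕ) (hτ : 1 ≤ τ) (k : ℕ) (hk : k = ⌈(0.95 : ℝ) * τ⌉₊)
    (T δ : ℝ) (hT : 0 ≤ T) (hδ : 0 ≤ δ)
    (U : ℝ → ℝ) (hU : Monotone U)
    (X : Fin τ → ℝ)
    (ρ : Fin τ → ℝ) (hρ : ∀ t, ρ t = 0 ∨ ρ t = 1) (hρsum : (∑ t, ρ t) = (k : ℝ))
    (μ : ℝ) (hμ : μ = ⨆ t, ρ t * X t) (hμ95 : μ = mu95 τ X)
    (Dbar : Fin τ → ℝ)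
    (Xbar : Fin τ → ℝ)
    (hXbar : ∀ t, Xbar t = if ρ t = 0 ∨ Dbar t ≤ μ then Dbar t else μ) :
    (∑ t, U (T * min (X t) (Dbar t))) - δ * mu95 τ X ≤
    (∑ t, U (T * Xbar t)) - δ * mu95 τ Xbar := by
  have hX_le : ∀ t, ρ t ≠ 0 → X t ≤ μ := fun t ht => by
    have hle := le_ciSup (Finite.bddAbove_range fun t => ρ t * X t) t
    rwa [(hρ t).resolve_left ht, one_mul, ← hμ] at hle
  have hmin_le : ∀ t, min (X t) (Dbar t) ≤ Xbar t := fun t =>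
    (hXbar t).symm ▸ min_le_ite_or_le (hX_le t)
  have hcard : #{t | ρ t = 1} = ⌈(0.95 : ℝ) * τ⌉₊ := by
    rw [← hk]
    exact_mod_cast (sum_eq_card_filter_eq_one ρ hρ).symm.trans hρsum
  have hcap : mu95 τ Xbar ≤ μ := by
    refine mu95_le_of_forall_mem_le hτ _ hcard fun t ht => (hXbar t).symm ▸ ite_or_le_le ?_
    simp only [(mem_filter.mp ht).2, one_ne_zero, not_false_eq_true]
  rw [← hμ95]
  exact sub_le_sub (sum_le_sum fun t _ => hU (mul_le_mul_of_nonneg_left (hmin_le t) hT))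
    (mul_le_mul_of_nonneg_left hcap hδ)

/-- The surplus obtained with the updated usage X̄ (on-demand when ρ[t] = 0 or
the exposed demand does not exceed μ = μ95(X), capped at μ otherwise) is no less than the
surplus obtained with the planned usage X evaluated against the exposed demand D̄. -/
theorem updated_usage_surplus_dominates
    (τ : ℕ) (hτ : 1 ≤ τ) (k : ℕ) (hk : k = ⌈(0.95 : ℝ) * τ⌉₊)
    (T δ : ℝ) (hT : 0 ≤ T) (hδ : 0 ≤ δ)
    (U : ℝ → ℝ) (hU : Monotone U)
    (X : Fin τ → ℝ) (hX : ∀ t, 0 ≤ X t)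
    (ρ : Fin τ → ℝ) (hρ : ∀ t, ρ t = 0 ∨ ρ t = 1) (hρsum : (∑ t, ρ t) = (k : ℝ))
    (μ : ℝ) (hμ : μ = ⨆ t, ρ t * X t) (hμ95 : μ = mu95 τ X)
    (Dbar : Fin τ → ℝ) (hDbar : ∀ t, 0 ≤ Dbar t)
    (Xbar : Fin τ → ℝ)
    (hXbar : ∀ t, Xbar t = if ρ t = 0 ∨ Dbar t ≤ μ then Dbar t else μ) :
    (∑ t, U (T * min (X t) (Dbar t))) - δ * mu95 τ X ≤
    (∑ t, U (T * Xbar t)) - δ * mu95 τ Xbar :=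
  updated_usage_surplus_dominates_general τ hτ k hk T δ hT hδ U hU X ρ hρ hρsum μ hμ hμ95 Dbar Xbar
    hXbar
end
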